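/- arXiv:1101.5518 — 2 statements merged into one kernel-verified Lean document; each statement's English description precedes it below -/
import Mathlib

section
/- For any connected graph G with vertex colouring ω from colour-set C and any target colour d in C, the minimum number of flooding moves required to make G monochromatic in colour d equals the minimum over all spanning trees T of G of the minimum number of flooding moves required to make T monochromatic in colour d. -/
/-!
A sequence flooding `G` floods some spanning tree as well: before each move, extend the forest
built so far to a spanning forest of the monochromatic subgraph. Monochromatic edges stay
monochromatic under flood moves, so the forest stays inside the monochromatic subgraph and every
move recolours exactly the same set in the final tree as in `G`.

Conversely, flooding a spanning subgraph `H` of `G` is no easier. After the first move of an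
`H`-flooding sequence, the board differs from the initial one only inside a single monochromatic
component of `G`, and by induction it can be flooded in `G` with the remaining number of moves.
Shadowing those moves, each at the cost of at most one move on the initial board, preserves this
kind of difference, and one final move removes it: the first `H`-move pays for that last move.
-/

noncomputable section

variable {V C : Type*}

/-- The monochromatic component of `v`: vertices reachable from `v` through
vertices of the same colour. -/
def monoComp (G : SimpleGraph V) (ω : V → C) (v : V) : Set V :=
  {u | Relation.ReflTransGen (fun a b => G.Adj a b ∧ ω a = ω b) v u}

open Classical in
/-- Playing the single flood move `mv = (v, d)`: the monochromatic component of
`v` receives colour `d`. -/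
def floodMove (G : SimpleGraph V) (ω : V → C) (mv : V × C) : V → C :=
  fun u => if u ∈ monoComp G ω mv.1 then mv.2 else ω u

/-- Playing a sequence of flood moves. -/
def play (G : SimpleGraph V) : (V → C) → List (V × C) → (V → C)
  | ω, [] => ω
  | ω, mv :: S => play G (floodMove G ω mv) S

/-- A sequence `S` floods `G` with colour `d` if after playing it every vertex
has colour `d`. -/
def Floods (G : SimpleGraph V) (ω : V → C) (S : List (V × C)) (d : C) : Prop :=
  ∀ u, play G ω S u = d

/-- `m(G, ω, d)`: the minimum number of moves needed to make `G`
monochromatic in colour `d`. -/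
def floodNum (G : SimpleGraph V) (ω : V → C) (d : C) : ℕ :=
  sInf {k | ∃ S : List (V × C), S.length = k ∧ Floods G ω S d}

/-- `m(G, ω)`: the minimum number of moves needed to make `G` monochromatic. -/
def floodNumMin (G : SimpleGraph V) (ω : V → C) : ℕ :=
  sInf {k | ∃ (S : List (V × C)) (d : C), S.length = k ∧ Floods G ω S d}

open Classical in
/-- The subsequence of moves of `S` played in the vertex set `A`, viewed as
moves of the induced subgraph on `A`. -/
def restrictMoves (A : Set V) (S : List (V × C)) : List (↥A × C) :=
  S.filterMap (fun mv => if h : mv.1 ∈ A then some (⟨mv.1, h⟩, mv.2) else none)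

/-- Moves of an induced subgraph on `A`, viewed as moves of the ambient graph. -/
def liftMoves (A : Set V) (S : List (↥A × C)) : List (V × C) :=
  S.map (fun mv => ((mv.1 : V), mv.2))

end


section FloodIt

open Relation SimpleGraph

variable {V C : Type*} {G H : SimpleGraph V} {ω a b : V → C}

def monoGraph (G : SimpleGraph V) (ω : V → C) : SimpleGraph V where
  Adj u v := G.Adj u v ∧ ω u = ω v
  symm := ⟨fun _ _ h => ⟨h.1.symm, h.2.symm⟩⟩
  loopless := ⟨fun _ h => h.1.ne rfl⟩

lemma mem_monoComp_iff_reachable {v u : V} :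
    u ∈ monoComp G ω v ↔ (monoGraph G ω).Reachable v u := by
  rw [reachable_iff_reflTransGen]
  rfl

lemma monoGraph_le : monoGraph G ω ≤ G := fun _ _ h => h.1

lemma monoGraph_mono (h : H ≤ G) : monoGraph H ω ≤ monoGraph G ω :=
  fun _ _ huv => ⟨h huv.1, huv.2⟩

lemma mem_monoComp_self (v : V) : v ∈ monoComp G ω v := ReflTransGen.refl

lemma monoComp_mono (h : H ≤ G) {v : V} : monoComp H ω v ⊆ monoComp G ω v :=
  fun _ hu => mem_monoComp_iff_reachable.2 <|
    (mem_monoComp_iff_reachable.1 hu).mono (monoGraph_mono h)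

lemma eq_of_mem_monoComp {v u : V} (h : u ∈ monoComp G ω v) : ω u = ω v := by
  induction h with
  | refl => rfl
  | tail _ h ih => rw [← h.2, ih]

lemma monoComp_eq_of_mem {v u : V} (h : u ∈ monoComp G ω v) :
    monoComp G ω u = monoComp G ω v := by
  have h' := mem_monoComp_iff_reachable.1 h
  ext z
  simp only [mem_monoComp_iff_reachable]
  exact ⟨h'.trans, h'.symm.trans⟩

lemma monoComp_subset_of_forall_eq {ω' : V → C} {v : V}
    (h : ∀ z ∈ monoComp G ω v, ω' z = ω' v) : monoComp G ω v ⊆ monoComp G ω' v := by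
  intro u hu
  induction hu with
  | refl => exact ReflTransGen.refl
  | @tail y z hy hyz ih =>
      exact ReflTransGen.tail ih ⟨hyz.1, by rw [h y hy, h z (hy.tail hyz)]⟩

lemma monoComp_subset_of_eqOn {ω' : V → C} {v : V} (h : Set.EqOn ω' ω (monoComp G ω v)) :
    monoComp G ω v ⊆ monoComp G ω' v :=
  monoComp_subset_of_forall_eq fun z hz => by
    rw [h hz, h (mem_monoComp_self v), eq_of_mem_monoComp hz]

lemma floodMove_of_mem {v u : V} {c : C} (h : u ∈ monoComp G ω v) :
    floodMove G ω (v, c) u = c :=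
  if_pos h

lemma floodMove_of_notMem {v u : V} {c : C} (h : u ∉ monoComp G ω v) :
    floodMove G ω (v, c) u = ω u :=
  if_neg h

lemma floodMove_congr_monoComp (h : monoComp H ω = monoComp G ω) (mv : V × C) :
    floodMove H ω mv = floodMove G ω mv := by
  unfold floodMove
  rw [h]

lemma play_append (S₁ S₂ : List (V × C)) :
    play G ω (S₁ ++ S₂) = play G (play G ω S₁) S₂ := by
  induction S₁ generalizing ω with
  | nil => rfl
  | cons mv S ih => exact ih

/-- The invariant by which a board `a` shadows a board `b`: once `b` is monochromatic, one move on
`a` catches up. -/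
def AgreeOutsideMonoComp (G : SimpleGraph V) (a b : V → C) : Prop :=
  ∃ v, ∀ u, a u ≠ b u → u ∈ monoComp G a v

namespace AgreeOutsideMonoComp

/-- The move on `b` meets the set where `a` and `b` differ: give the differing component of `a`
the colour of the moved component; in the new `a` the two components merge. -/
lemma floodMove_of_exists_ne (h : AgreeOutsideMonoComp G a b) {w p : V} (x : C)
    (hp : p ∈ monoComp G b w) (hpab : a p ≠ b p) :
    AgreeOutsideMonoComp G (floodMove G a (p, b w)) (floodMove G b (w, x)) := by
  obtain ⟨v, hv⟩ := h
  have hdiff : ∀ u, a u ≠ b u → u ∈ monoComp G a p := fun u hu => by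
    rw [monoComp_eq_of_mem (hv p hpab)]
    exact hv u hu
  have hA' : ∀ z ∈ monoComp G a p, floodMove G a (p, b w) z = b w := fun _ hz =>
    floodMove_of_mem hz
  have hP' : ∀ z ∈ monoComp G b p, floodMove G a (p, b w) z = b w := by
    intro z hz
    by_cases hzA : z ∈ monoComp G a p
    · exact hA' z hzA
    · rw [floodMove_of_notMem hzA, not_imp_comm.1 (hdiff z) hzA, eq_of_mem_monoComp hz,
        eq_of_mem_monoComp hp]
  have hA : monoComp G a p ⊆ monoComp G (floodMove G a (p, b w)) p :=
    monoComp_subset_of_forall_eq fun z hz => by rw [hA' z hz, hA' p (mem_monoComp_self p)]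
  have hP : monoComp G b p ⊆ monoComp G (floodMove G a (p, b w)) p :=
    monoComp_subset_of_forall_eq fun z hz => by rw [hP' z hz, hP' p (mem_monoComp_self p)]
  refine ⟨p, fun u hu => ?_⟩
  by_cases huP : u ∈ monoComp G b w
  · exact hP (by rwa [monoComp_eq_of_mem hp])
  by_cases huA : u ∈ monoComp G a p
  · exact hA huA
  · refine absurd ?_ hu
    rw [floodMove_of_notMem huA, floodMove_of_notMem huP]
    exact not_imp_comm.1 (hdiff u) huA

/-- Here `a` agrees with `b` on the moved component, which therefore already lies in the
differing component of `a`: no answer is needed. -/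
lemma of_exists_ne (h : AgreeOutsideMonoComp G a b) {w q : V} (x : C)
    (hP : Set.EqOn a b (monoComp G b w)) (hq : q ∈ monoComp G a w) (hqab : a q ≠ b q) :
    AgreeOutsideMonoComp G a (floodMove G b (w, x)) := by
  obtain ⟨v, hv⟩ := h
  refine ⟨v, fun u hu => ?_⟩
  by_cases huP : u ∈ monoComp G b w
  · rw [← monoComp_eq_of_mem (hv q hqab), monoComp_eq_of_mem hq]
    exact monoComp_subset_of_eqOn hP huP
  · rw [floodMove_of_notMem huP] at hu
    exact hv u hu

lemma floodMove_of_eqOn (h : AgreeOutsideMonoComp G a b) {w : V} (x : C)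
    (hP : Set.EqOn a b (monoComp G b w)) (hA : Set.EqOn b a (monoComp G a w)) :
    AgreeOutsideMonoComp G (floodMove G a (w, x)) (floodMove G b (w, x)) := by
  obtain ⟨v, hv⟩ := h
  have hAP : monoComp G a w = monoComp G b w :=
    (monoComp_subset_of_eqOn hA).antisymm (monoComp_subset_of_eqOn hP)
  refine ⟨v, fun u hu => ?_⟩
  have huP : u ∉ monoComp G b w := fun huP => hu <| by
    rw [floodMove_of_mem (hAP ▸ huP : u ∈ monoComp G a w), floodMove_of_mem huP]
  have huA : u ∉ monoComp G a w := hAP ▸ huP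
  rw [floodMove_of_notMem huA, floodMove_of_notMem huP] at hu
  have huv := hv u hu
  have hdisj : ∀ z ∈ monoComp G a v, z ∉ monoComp G a w := fun z hzv hzw => huA <| by
    rwa [← monoComp_eq_of_mem hzw, monoComp_eq_of_mem hzv]
  exact monoComp_subset_of_eqOn (fun z hz => floodMove_of_notMem (hdisj z hz)) huv

lemma exists_floodMove (h : AgreeOutsideMonoComp G a b) (mv : V × C) :
    ∃ S : List (V × C), S.length ≤ 1 ∧
      AgreeOutsideMonoComp G (play G a S) (floodMove G b mv) := by
  obtain ⟨w, x⟩ := mv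
  by_cases hP : ∃ p ∈ monoComp G b w, a p ≠ b p
  · obtain ⟨p, hp, hpab⟩ := hP
    exact ⟨[(p, b w)], le_rfl, h.floodMove_of_exists_ne x hp hpab⟩
  push Not at hP
  by_cases hA : ∃ q ∈ monoComp G a w, a q ≠ b q
  · obtain ⟨q, hq, hqab⟩ := hA
    exact ⟨[], zero_le_one, h.of_exists_ne x hP hq hqab⟩
  push Not at hA
  exact ⟨[(w, x)], le_rfl, h.floodMove_of_eqOn x hP fun z hz => (hA z hz).symm⟩

lemma exists_floods (h : AgreeOutsideMonoComp G a b) {S : List (V × C)} {d : C}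
    (hS : Floods G b S d) :
    ∃ S' : List (V × C), S'.length ≤ S.length + 1 ∧ Floods G a S' d := by
  induction S generalizing a b with
  | nil =>
      obtain ⟨v, hv⟩ := h
      refine ⟨[(v, d)], le_rfl, fun u => ?_⟩
      by_cases hu : u ∈ monoComp G a v
      · exact floodMove_of_mem hu
      · exact (floodMove_of_notMem hu).trans ((not_imp_comm.1 (hv u) hu).trans (hS u))
  | cons mv S ih =>
      obtain ⟨S₀, hS₀, h₀⟩ := h.exists_floodMove mv
      obtain ⟨S₁, hS₁, h₁⟩ := ih h₀ hS
      refine ⟨S₀ ++ S₁, by simp only [List.length_append, List.length_cons]; omega, ?_⟩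
      rw [Floods, play_append]
      exact h₁

end AgreeOutsideMonoComp

lemma agreeOutsideMonoComp_floodMove (hHG : H ≤ G) (mv : V × C) :
    AgreeOutsideMonoComp G ω (floodMove H ω mv) := by
  obtain ⟨v, c⟩ := mv
  refine ⟨v, fun u hu => ?_⟩
  by_cases h : u ∈ monoComp H ω v
  · exact monoComp_mono hHG h
  · exact absurd (floodMove_of_notMem h).symm hu

lemma Floods.exists_of_le (hHG : H ≤ G) {S : List (V × C)} {d : C} (hS : Floods H ω S d) :
    ∃ S' : List (V × C), S'.length ≤ S.length ∧ Floods G ω S' d := by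
  induction S generalizing ω with
  | nil => exact ⟨[], le_rfl, hS⟩
  | cons mv S ih =>
      obtain ⟨S₁, hS₁, h₁⟩ := ih hS
      obtain ⟨S', hS', h'⟩ := (agreeOutsideMonoComp_floodMove hHG mv).exists_floods h₁
      exact ⟨S', hS'.trans (by simpa using hS₁), h'⟩

lemma monoGraph_le_monoGraph_floodMove (mv : V × C) :
    monoGraph G ω ≤ monoGraph G (floodMove G ω mv) := by
  obtain ⟨v, c⟩ := mv
  intro y z hyz
  refine ⟨hyz.1, ?_⟩
  by_cases hy : y ∈ monoComp G ω v
  · rw [floodMove_of_mem hy, floodMove_of_mem (hy.tail hyz : z ∈ monoComp G ω v)]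
  · have hz : z ∉ monoComp G ω v := fun hz => hy (hz.tail ⟨hyz.1.symm, hyz.2.symm⟩)
    rw [floodMove_of_notMem hy, floodMove_of_notMem hz, hyz.2]

lemma monoComp_eq_of_le_of_reachable_eq {F T : SimpleGraph V} (hF : F ≤ monoGraph G ω)
    (hreach : F.Reachable = (monoGraph G ω).Reachable) (hFT : F ≤ T) (hTG : T ≤ G) :
    monoComp T ω = monoComp G ω := by
  funext v
  refine (monoComp_mono hTG).antisymm fun u hu => ?_
  have hFT' : F ≤ monoGraph T ω := fun _ _ h => ⟨hFT h, (hF h).2⟩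
  rw [mem_monoComp_iff_reachable] at hu ⊢
  exact (hreach ▸ hu : F.Reachable v u).mono hFT'

lemma Floods.exists_isTree (hG : G.Connected) {S : List (V × C)} {d : C} {F : SimpleGraph V}
    (hF : F ≤ monoGraph G ω) (hFa : F.IsAcyclic) (hS : Floods G ω S d) :
    ∃ T, F ≤ T ∧ T ≤ G ∧ T.IsTree ∧ Floods T ω S d := by
  induction S generalizing ω F with
  | nil =>
      obtain ⟨T, hFT, hTG, hT⟩ :=
        hG.exists_isTree_le_of_le_of_isAcyclic (hF.trans monoGraph_le) hFa
      exact ⟨T, hFT, hTG, hT, hS⟩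
  | cons mv S ih =>
      obtain ⟨F₁, hFF₁, hF₁, hF₁a, hreach⟩ :=
        exists_isAcyclic_reachable_eq_le_of_le_of_isAcyclic hF hFa
      obtain ⟨T, hF₁T, hTG, hT, hTS⟩ :=
        ih (hF₁.trans (monoGraph_le_monoGraph_floodMove mv)) hF₁a hS
      refine ⟨T, hFF₁.trans hF₁T, hTG, hT, ?_⟩
      change Floods T (floodMove T ω mv) S d
      rwa [floodMove_congr_monoComp
        (monoComp_eq_of_le_of_reachable_eq hF₁ hreach hF₁T hTG)]

lemma play_apply_of_forall_snd_eq {d : C} {u : V} {S : List (V × C)}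
    (hS : ∀ mv ∈ S, mv.2 = d) (hu : ω u = d) : play G ω S u = d := by
  induction S generalizing ω with
  | nil => exact hu
  | cons mv S ih =>
      refine ih (fun m hm => hS m (List.mem_cons_of_mem _ hm)) ?_
      obtain ⟨v, c⟩ := mv
      by_cases huv : u ∈ monoComp G ω v
      · exact (floodMove_of_mem huv).trans (hS _ List.mem_cons_self)
      · exact (floodMove_of_notMem huv).trans hu

lemma play_map_pair_apply (d : C) {L : List V} {u : V} (hu : u ∈ L) :
    play G ω (L.map (·, d)) u = d := by
  induction L generalizing ω with
  | nil => cases hu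
  | cons v L ih =>
      rcases List.mem_cons.1 hu with rfl | hu
      · exact play_apply_of_forall_snd_eq (ω := floodMove G ω (u, d)) (by simp)
          (floodMove_of_mem (mem_monoComp_self u))
      · exact ih hu

lemma exists_floods [Fintype V] (G : SimpleGraph V) (ω : V → C) (d : C) :
    ∃ S, Floods G ω S d :=
  ⟨_, fun _ => play_map_pair_apply d (Finset.mem_toList.2 (Finset.mem_univ _))⟩

lemma floodNum_le {S : List (V × C)} {d : C} (h : Floods G ω S d) :
    floodNum G ω d ≤ S.length :=
  Nat.sInf_le ⟨S, rfl, h⟩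

lemma exists_floods_length_eq_floodNum [Fintype V] (G : SimpleGraph V) (ω : V → C) (d : C) :
    ∃ S : List (V × C), S.length = floodNum G ω d ∧ Floods G ω S d := by
  obtain ⟨S, hS⟩ := exists_floods G ω d
  exact Nat.sInf_mem (s := {k | ∃ S : List (V × C), S.length = k ∧ Floods G ω S d})
    ⟨S.length, S, rfl, hS⟩

lemma floodNum_le_floodNum_of_le [Fintype V] (hHG : H ≤ G) (ω : V → C) (d : C) :
    floodNum G ω d ≤ floodNum H ω d := by
  obtain ⟨S, hSlen, hS⟩ := exists_floods_length_eq_floodNum H ω d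
  obtain ⟨S', hS', h'⟩ := hS.exists_of_le hHG
  exact (floodNum_le h').trans (hSlen ▸ hS')

end FloodIt

/-- the minimum number of moves to flood a connected graph `G`
with colour `d` equals the minimum over all spanning trees `T` of `G` of the
number of moves needed to flood `T` with colour `d`. -/
theorem stmt0 {V C : Type*} [Fintype V] (G : SimpleGraph V) (hG : G.Connected)
    (ω : V → C) (d : C) :
    floodNum G ω d =
      sInf {k | ∃ T : SimpleGraph V, T ≤ G ∧ T.IsTree ∧ floodNum T ω d = k} := by
  obtain ⟨S, hSlen, hS⟩ := exists_floods_length_eq_floodNum G ω d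
  obtain ⟨T₀, -, hT₀G, hT₀, hT₀S⟩ :=
    hS.exists_isTree hG bot_le SimpleGraph.isAcyclic_bot
  refine le_antisymm (le_csInf ⟨_, T₀, hT₀G, hT₀, rfl⟩ ?_) ?_
  · rintro _ ⟨T, hTG, -, rfl⟩
    exact floodNum_le_floodNum_of_le hTG ω d
  · exact le_trans (Nat.sInf_le ⟨T₀, hT₀G, hT₀, rfl⟩) (hSlen ▸ floodNum_le hT₀S)
end

section
/- In a 2 × n flood-it board, any two borders b₁ ≤ b₂ (ordered by the positions where they meet the top and bottom edges) are non-crossing: b₁ lies entirely weakly to the left of b₂. Consequently the number of borders of a 2 × n board is exactly (n+1)². -/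
/-- The border of a `2 × n` board (of height `2`, drawn in the plane) meeting
the top edge at horizontal position `t` and the bottom edge at position `b`:
it descends from `(t, 2)` to `(t, 1)`, runs horizontally along the middle line
`y = 1` from `t` to `b`, and descends from `(b, 1)` to `(b, 0)`. -/
def borderPath (t b : ℝ) : Set (ℝ × ℝ) :=
  {p | (p.1 = t ∧ 1 ≤ p.2 ∧ p.2 ≤ 2) ∨
       (p.2 = 1 ∧ min t b ≤ p.1 ∧ p.1 ≤ max t b) ∨
       (p.1 = b ∧ 0 ≤ p.2 ∧ p.2 ≤ 1)}

/-- The closed region weakly to the left of the border with top position `t`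
and bottom position `b`. -/
def leftRegion (t b : ℝ) : Set (ℝ × ℝ) :=
  {p | (1 < p.2 → p.1 ≤ t) ∧ (p.2 < 1 → p.1 ≤ b) ∧ (p.2 = 1 → p.1 ≤ max t b)}

/-- borders of a `2 × n` board are determined by the pair of
positions (among the `n+1` vertical grid lines) where they meet the top and the
bottom of the board; if `b₁ ≤ b₂` (both meeting points of `b₁` are weakly to
the left of those of `b₂`) then `b₁` lies entirely weakly to the left of `b₂`
(they never cross), and the total number of borders is exactly `(n+1)²`. -/
theorem stmt7 (n : ℕ) (b₁ b₂ : Fin (n + 1) × Fin (n + 1))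
    (h1 : (b₁.1 : ℕ) ≤ (b₂.1 : ℕ)) (h2 : (b₁.2 : ℕ) ≤ (b₂.2 : ℕ)) :
    borderPath ((b₁.1 : ℕ) : ℝ) ((b₁.2 : ℕ) : ℝ) ⊆
      leftRegion ((b₂.1 : ℕ) : ℝ) ((b₂.2 : ℕ) : ℝ) ∧
    Fintype.card (Fin (n + 1) × Fin (n + 1)) = (n + 1) ^ 2 := by
  have ht : ((b₁.1 : ℕ) : ℝ) ≤ ((b₂.1 : ℕ) : ℝ) := Nat.cast_le.mpr h1
  have hb : ((b₁.2 : ℕ) : ℝ) ≤ ((b₂.2 : ℕ) : ℝ) := Nat.cast_le.mpr h2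
  constructor
  · intro p hp
    rcases hp with ⟨hx, h1p, h2p⟩ | ⟨hy, hlo, hhi⟩ | ⟨hx, h0p, h1p⟩
    · exact ⟨fun _ => hx ▸ ht, fun h => absurd h (not_lt.mpr h1p),
        fun _ => hx ▸ le_trans ht (le_max_left _ _)⟩
    · refine ⟨fun h => ?_, fun h => ?_, fun _ => le_trans hhi (max_le_max ht hb)⟩ <;>
        simp [hy] at h
    · exact ⟨fun h => absurd h (not_lt.mpr (by linarith)), fun _ => hx ▸ hb,
        fun _ => hx ▸ le_trans hb (le_max_right _ _)⟩
  · simp [Fintype.card_prod, sq]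
end
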